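/- arXiv:2006.02175 — 3 statements merged into one kernel-verified Lean document; each statement's English description precedes it below -/
import Mathlib

section
/- For every real x with 1 ≤ x ≤ √5/2, the quantity −1 + x + ln(2/(x+1)) − 0.24·(x²−1) is nonnegative. -/
open Real

/-- Since `u ≤ sinh u` for `u ≥ 0`, taking `u = log t`. -/
theorem Real.log_le_half_sub_inv {t : ℝ} (ht : 1 ≤ t) : log t ≤ (t - t⁻¹) / 2 := by
  rw [← sinh_log (by linarith)]
  exact self_le_sinh_iff.mpr (log_nonneg ht)

theorem stmt_8 (x : ℝ) (hx1 : 1 ≤ x) (hx2 : x ≤ Real.sqrt 5 / 2) :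
    0 ≤ -1 + x + Real.log (2 / (x + 1)) - 0.24 * (x ^ 2 - 1) := by
  have hx_le : x ≤ 1.12 := by
    have : √5 ≤ 2.24 := (sqrt_le_left (by norm_num)).mpr (by norm_num)
    linarith
  have hlog : log (2 / (x + 1)) = -log ((x + 1) / 2) := by rw [← log_inv, inv_div]
  have hbound := log_le_half_sub_inv (show 1 ≤ (x + 1) / 2 by linarith)
  -- after clearing denominators the gap is `(x - 1) * (1.08 * x + 0.04 - 0.96 * x ^ 2) ≥ 0`
  have hpoly : ((x + 1) / 2 - ((x + 1) / 2)⁻¹) / 2 ≤ (x - 1) - 0.24 * (x ^ 2 - 1) := by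
    rw [inv_div, div_le_iff₀ two_pos, div_sub_div _ _ two_ne_zero (by linarith),
      div_le_iff₀ (by linarith)]
    have hquad : 0 ≤ 1.08 * x + 0.04 - 0.96 * x ^ 2 := by nlinarith
    nlinarith [mul_nonneg (sub_nonneg.mpr hx1) hquad]
  linarith
end

section
/- Let k be a positive integer and let Δ_k be the set of vectors v ∈ ℝ^k such that ‖v‖² ≤ 6 and √k·v_j is an integer for every coordinate j. Then |Δ_k| ≤ 2^{5.5·k}. -/
open Finset

/-! Scaling by `√k` identifies the set with the integer points `n ∈ ℤᵏ` with `∑ nⱼ² ≤ 6k`.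
Rankin's trick bounds their number by `(3/2)^(6k) ∑ₙ (2/3)^(∑ nⱼ²) = (3/2)^(6k) θᵏ`, where
`θ = ∑_{m ∈ ℤ} (2/3)^(m²) ≤ 1 + 2 (2/3) / (1 - 4/9) = 17/5` because `m² ≥ 2|m| - 1`.
Finally `(3/2)⁶ · 17/5 ≈ 38.7 ≤ 2^5.5 ≈ 45.3`. -/

theorem sum_range_pow_succ_sq_le {q : ℝ} (hq₀ : 0 ≤ q) (hq₁ : q < 1) (N : ℕ) :
    ∑ n ∈ range N, q ^ ((n + 1) ^ 2) ≤ q / (1 - q ^ 2) := by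
  have hq2 : q ^ 2 < 1 := pow_lt_one₀ hq₀ hq₁ two_ne_zero
  calc ∑ n ∈ range N, q ^ ((n + 1) ^ 2)
      ≤ ∑ n ∈ range N, q * (q ^ 2) ^ n := by
        gcongr with n
        rw [← pow_mul, ← pow_succ']
        exact pow_le_pow_of_le_one hq₀ hq₁.le (by nlinarith)
    _ = q * ∑ n ∈ range N, (q ^ 2) ^ n := (mul_sum ..).symm
    _ ≤ q * ((q ^ 2) ^ 0 / (1 - q ^ 2)) := by
        rw [range_eq_Ico]
        exact mul_le_mul_of_nonneg_left (geom_sum_Ico_le_of_lt_one (by positivity) hq2) hq₀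
    _ = q / (1 - q ^ 2) := by ring

theorem sum_Icc_pow_natAbs_sq_le {q : ℝ} (hq₀ : 0 ≤ q) (hq₁ : q < 1) (N : ℕ) :
    ∑ m ∈ Icc (-N : ℤ) N, q ^ (m.natAbs ^ 2) ≤ 1 + 2 * (q / (1 - q ^ 2)) := by
  have heven : Function.Even fun m : ℤ ↦ q ^ (m.natAbs ^ 2) := fun m ↦ by simp
  rw [sum_Icc_of_even_eq_range heven, sum_range_succ']
  simp only [Int.natAbs_natCast, Int.natAbs_zero, zero_pow two_ne_zero, pow_zero, nsmul_eq_mul]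
  linarith [sum_range_pow_succ_sq_le hq₀ hq₁ N]

theorem card_filter_mul_pow_le_sum_pow {α : Type*} (s : Finset α) (f : α → ℕ) (R : ℕ) {q : ℝ}
    (hq₀ : 0 ≤ q) (hq₁ : q ≤ 1) :
    (#{x ∈ s | f x ≤ R} : ℝ) * q ^ R ≤ ∑ x ∈ s, q ^ f x := by
  calc (#{x ∈ s | f x ≤ R} : ℝ) * q ^ R = ∑ x ∈ s with f x ≤ R, q ^ R := by
        rw [sum_const, nsmul_eq_mul]
    _ ≤ ∑ x ∈ s with f x ≤ R, q ^ f x :=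
        sum_le_sum fun x hx ↦ pow_le_pow_of_le_one hq₀ hq₁ (mem_filter.1 hx).2
    _ ≤ ∑ x ∈ s, q ^ f x :=
        sum_le_sum_of_subset_of_nonneg (filter_subset _ _) fun _ _ _ ↦ by positivity

theorem sum_piFinset_pow_sum {ι : Type*} [Fintype ι] [DecidableEq ι] {β : Type*}
    (t : Finset β) (g : β → ℕ) (q : ℝ) :
    ∑ n ∈ Fintype.piFinset fun _ : ι ↦ t, q ^ (∑ j, g (n j)) =
      (∑ m ∈ t, q ^ g m) ^ Fintype.card ι := by
  simp_rw [← prod_pow_eq_pow_sum]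
  rw [← prod_univ_sum (fun _ ↦ t) fun _ m ↦ q ^ g m, prod_const, card_univ]

noncomputable def intBall (ι : Type*) [Fintype ι] [DecidableEq ι] (R : ℕ) : Finset (ι → ℤ) :=
  {n ∈ Fintype.piFinset fun _ ↦ Icc (-R : ℤ) R | ∑ j, (n j).natAbs ^ 2 ≤ R}

section IntBall

variable {ι : Type*} [Fintype ι] [DecidableEq ι]

theorem card_intBall_le (R : ℕ) :
    (#(intBall ι R) : ℝ) ≤ (3 / 2) ^ R * (17 / 5) ^ Fintype.card ι := by
  have hball : (#(intBall ι R) : ℝ) * (2 / 3) ^ R ≤ (17 / 5) ^ Fintype.card ι :=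
    calc (#(intBall ι R) : ℝ) * (2 / 3) ^ R
        ≤ ∑ n ∈ Fintype.piFinset fun _ : ι ↦ Icc (-R : ℤ) R,
            (2 / 3 : ℝ) ^ (∑ j, (n j).natAbs ^ 2) :=
          card_filter_mul_pow_le_sum_pow _ _ R (by norm_num) (by norm_num)
      _ = (∑ m ∈ Icc (-R : ℤ) R, (2 / 3 : ℝ) ^ (m.natAbs ^ 2)) ^ Fintype.card ι :=
          sum_piFinset_pow_sum _ (fun m : ℤ ↦ m.natAbs ^ 2) _
      _ ≤ (17 / 5) ^ Fintype.card ι := by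
          gcongr
          exact (sum_Icc_pow_natAbs_sq_le (by norm_num) (by norm_num) R).trans_eq (by norm_num)
  rw [← le_div_iff₀ (by positivity)] at hball
  calc (#(intBall ι R) : ℝ) ≤ (17 / 5) ^ Fintype.card ι / (2 / 3) ^ R := hball
    _ = (3 / 2) ^ R * (17 / 5) ^ Fintype.card ι := by
      rw [div_eq_mul_inv, ← inv_pow, mul_comm]; norm_num

theorem subset_image_intBall {c : ℕ} (hc : 0 < c) (r : ℕ) :
    {v : ι → ℝ | ∑ j, v j ^ 2 ≤ r ∧ ∀ j, ∃ n : ℤ, √c * v j = n} ⊆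
      (fun (n : ι → ℤ) j ↦ (n j : ℝ) / √c) '' intBall ι (c * r) := by
  rintro v ⟨hv, hint⟩
  choose n hn using hint
  have hc' : (0 : ℝ) < √c := Real.sqrt_pos.2 (by exact_mod_cast hc)
  have hsum : ∑ j, (n j).natAbs ^ 2 ≤ c * r := by
    have : (∑ j, ((n j).natAbs ^ 2 : ℕ) : ℝ) ≤ c * r := by
      calc (∑ j, ((n j).natAbs ^ 2 : ℕ) : ℝ) = c * ∑ j, v j ^ 2 := by
            push_cast
            simp_rw [Nat.cast_natAbs, Int.cast_abs, sq_abs, ← hn, mul_pow,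
              Real.sq_sqrt (Nat.cast_nonneg c), mul_sum]
        _ ≤ c * r := by gcongr
    exact_mod_cast this
  refine ⟨n, mem_filter.2 ⟨Fintype.mem_piFinset.2 fun j ↦ ?_, hsum⟩, ?_⟩
  · have : (n j).natAbs ≤ c * r :=
      (Nat.le_self_pow two_ne_zero _).trans <|
        (single_le_sum (fun i _ ↦ Nat.zero_le ((n i).natAbs ^ 2)) (mem_univ j)).trans hsum
    rw [mem_Icc, ← abs_le, Int.abs_eq_natAbs]
    exact_mod_cast this
  · funext j
    show (n j : ℝ) / √c = v j
    rw [← hn, mul_div_cancel_left₀ _ hc'.ne']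

end IntBall

theorem three_halves_pow_six_mul_le_two_rpow : (3 / 2 : ℝ) ^ 6 * (17 / 5) ≤ 2 ^ (5.5 : ℝ) := by
  have hsq : ((2 : ℝ) ^ (5.5 : ℝ)) ^ 2 = 2 ^ 11 := by
    rw [← Real.rpow_mul_natCast (by norm_num)]; norm_num
  nlinarith [Real.rpow_nonneg (show (0 : ℝ) ≤ 2 by norm_num) 5.5]

theorem stmt_10 (k : ℕ) (hk : 0 < k) :
    ({v : Fin k → ℝ | (∑ j, v j ^ 2) ≤ 6 ∧ ∀ j, ∃ n : ℤ, Real.sqrt k * v j = n} : Set (Fin k → ℝ)).Finite ∧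
    (({v : Fin k → ℝ | (∑ j, v j ^ 2) ≤ 6 ∧ ∀ j, ∃ n : ℤ, Real.sqrt k * v j = n} : Set (Fin k → ℝ)).ncard : ℝ)
      ≤ (2 : ℝ) ^ ((5.5 : ℝ) * k) := by
  have hsub := subset_image_intBall (ι := Fin k) hk 6
  rw [Nat.cast_ofNat] at hsub
  have hfin := (intBall (Fin k) (k * 6)).finite_toSet.image fun n j ↦ (n j : ℝ) / √k
  refine ⟨hfin.subset hsub, ?_⟩
  calc _ ≤ (#(intBall (Fin k) (k * 6)) : ℝ) := by
        exact_mod_cast (Set.ncard_le_ncard hsub hfin).trans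
          ((Set.ncard_image_le (finite_toSet _)).trans (Set.ncard_coe_finset _).le)
    _ ≤ (3 / 2) ^ (k * 6) * (17 / 5) ^ k := by simpa using card_intBall_le (ι := Fin k) (k * 6)
    _ = ((3 / 2) ^ 6 * (17 / 5)) ^ k := by rw [pow_mul', mul_pow]
    _ ≤ (2 ^ (5.5 : ℝ)) ^ k := by gcongr; exact three_halves_pow_six_mul_le_two_rpow
    _ = 2 ^ ((5.5 : ℝ) * k) := (Real.rpow_mul_natCast (by norm_num) _ _).symm
end

section
/- Let p ∈ (0,1] and δ ∈ (0,1), and suppose X ≥ 0 is a sum of independent geometric random variables X₁,…,X_n where each Xᵢ has success probability pᵢ ≥ p. Let μ = E[X] and let λ ∈ (0,1]. Then Pr[X ≤ λ·μ] ≤ exp(−p·μ·(λ − 1 − ln λ)). -/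
/-!
Chernoff's method at the negative parameter `t = -p (λ⁻¹ - 1)`. A variable counting the trials
up to the first success of probability `q ≥ p` has `E[e^{tX}] = q e^t / (1 - (1 - q) e^t)`, which
is at most `q / (q + p (λ⁻¹ - 1))` because `e^s ≥ 1 + s`, and Bernoulli's inequality
`(1 + x)^a ≤ 1 + a x` for `a = p / q ≤ 1` bounds this by `λ^{p/q}`. By independence the Laplace
transform of the sum is at most `λ^{p Σ 1/qᵢ} = λ^{pμ}`, and Markov's inequality gives
`Pr[X ≤ λμ] ≤ e^{-tλμ} λ^{pμ} = exp (-pμ (λ - 1 - ln λ))`.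
-/

open MeasureTheory ProbabilityTheory Finset Real

lemma hasSum_geometric_mul_succ {q : ℝ} (hq0 : 0 < q) (hq1 : q ≤ 1) :
    HasSum (fun n : ℕ => (1 - q) ^ n * q * ((n : ℝ) + 1)) q⁻¹ := by
  have hr : ‖1 - q‖ < 1 := by rw [norm_eq_abs, abs_lt]; constructor <;> linarith
  convert! ((hasSum_coe_mul_geometric_of_norm_lt_one hr).add
    (hasSum_geometric_of_norm_lt_one hr)).mul_right q using 1
  · funext n; ring
  · rw [sub_sub_cancel]; field_simp; ring

lemma hasSum_geometric_mul_exp_succ {q t : ℝ} (hq0 : 0 < q) (hq1 : q ≤ 1) (ht : t ≤ 0) :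
    HasSum (fun n : ℕ => (1 - q) ^ n * q * exp (t * (n + 1)))
      (q * exp t / (1 - (1 - q) * exp t)) := by
  have hexp : exp t ≤ 1 := exp_le_one_iff.2 ht
  have hr0 : 0 ≤ (1 - q) * exp t := mul_nonneg (by linarith) (exp_pos t).le
  have hr1 : (1 - q) * exp t < 1 := by nlinarith [exp_pos t]
  convert! (hasSum_geometric_of_lt_one hr0 hr1).mul_left (q * exp t) using 1
  funext n; rw [mul_add_one, exp_add, mul_comm t, exp_nat_mul, mul_pow]; ring

section GeometricLaw

variable {Ω : Type*} [MeasurableSpace Ω] {P : Measure Ω} {Z : Ω → ℕ} {q : unitInterval}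

lemma map_eq_map_succ_geometricMeasure [IsProbabilityMeasure P] (hZ : Measurable Z) (hq : q ≠ 0)
    (hZq : ∀ m : ℕ, P {ω | Z ω = m + 1} = ENNReal.ofReal ((1 - q) ^ m * q)) :
    P.map Z = (geometricMeasure q).map (· + 1) := by
  have := Measure.isProbabilityMeasure_map (μ := P) hZ.aemeasurable
  have hsucc (m : ℕ) : P.map Z {m + 1} = geometricMeasure q {m} := by
    rw [Measure.map_apply hZ (measurableSet_singleton _), geometricMeasure_singleton hq]
    exact hZq m
  have htotal (ν : Measure ℕ) : ∑' a, ν {a} = ν Set.univ := by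
    simpa using (lintegral_countable' (μ := ν) 1).symm
  -- the masses at the successors already add up to `1`
  have hzero : P.map Z {0} = 0 := by
    have h := htotal (P.map Z)
    rw [tsum_eq_zero_add' ENNReal.summable] at h
    simp only [hsucc, htotal, measure_univ] at h
    simpa using h
  rw [Measure.ext_iff_singleton]
  rintro (_ | m)
  · rw [hzero, Measure.map_apply (by fun_prop) (measurableSet_singleton _),
      show ((· + 1) ⁻¹' {0} : Set ℕ) = ∅ by ext; simp, measure_empty]
  · rw [hsucc, Measure.map_apply (by fun_prop) (measurableSet_singleton _),
      show ((· + 1) ⁻¹' {m + 1} : Set ℕ) = {m} by ext; simp]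

lemma integral_comp_eq_tsum_of_map_eq (hZ : Measurable Z) (hq : q ≠ 0)
    (hlaw : P.map Z = (geometricMeasure q).map (· + 1)) (f : ℕ → ℝ) :
    ∫ ω, f (Z ω) ∂P = ∑' n, (1 - q : ℝ) ^ n * q * f (n + 1) := by
  rw [← integral_map hZ.aemeasurable measurable_from_top.aestronglyMeasurable, hlaw,
    integral_map (by fun_prop) measurable_from_top.aestronglyMeasurable,
    integral_geometricMeasure hq]
  simp only [smul_eq_mul]

lemma integrable_natCast_of_map_eq (hZ : Measurable Z) (hq : q ≠ 0)
    (hlaw : P.map Z = (geometricMeasure q).map (· + 1)) :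
    Integrable (fun ω => (Z ω : ℝ)) P := by
  have hq0 : 0 < (q : ℝ) := q.2.1.lt_of_ne' (unitInterval.coe_ne_zero.2 hq)
  have hsucc : Integrable (fun n : ℕ => ((n + 1 : ℕ) : ℝ)) (geometricMeasure q) := by
    rw [integrable_geometricMeasure_iff hq]
    convert (hasSum_geometric_mul_succ hq0 q.2.2).summable using 3 with n
    simp [abs_of_nonneg (by positivity : (0 : ℝ) ≤ n + 1)]
  have hmap : Integrable (fun n : ℕ => (n : ℝ)) (P.map Z) := by
    rw [hlaw]
    exact (integrable_map_measure measurable_from_top.aestronglyMeasurable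
      (by fun_prop)).2 hsucc
  exact (integrable_map_measure measurable_from_top.aestronglyMeasurable
    hZ.aemeasurable).1 hmap

lemma integral_natCast_of_map_eq (hZ : Measurable Z) (hq : q ≠ 0)
    (hlaw : P.map Z = (geometricMeasure q).map (· + 1)) :
    ∫ ω, (Z ω : ℝ) ∂P = (q : ℝ)⁻¹ := by
  have hq0 : 0 < (q : ℝ) := q.2.1.lt_of_ne' (unitInterval.coe_ne_zero.2 hq)
  rw [integral_comp_eq_tsum_of_map_eq hZ hq hlaw Nat.cast]
  push_cast
  exact (hasSum_geometric_mul_succ hq0 q.2.2).tsum_eq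

lemma mgf_natCast_of_map_eq (hZ : Measurable Z) (hq : q ≠ 0)
    (hlaw : P.map Z = (geometricMeasure q).map (· + 1)) {t : ℝ} (ht : t ≤ 0) :
    mgf (fun ω => (Z ω : ℝ)) P t = q * exp t / (1 - (1 - q) * exp t) := by
  have hq0 : 0 < (q : ℝ) := q.2.1.lt_of_ne' (unitInterval.coe_ne_zero.2 hq)
  rw [mgf, integral_comp_eq_tsum_of_map_eq hZ hq hlaw (fun n => exp (t * n))]
  push_cast
  exact (hasSum_geometric_mul_exp_succ hq0 q.2.2 ht).tsum_eq

end GeometricLaw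

lemma geometric_mgf_le_div_add {q s : ℝ} (hq0 : 0 < q) (hq1 : q ≤ 1) (hs : 0 ≤ s) :
    q * exp (-s) / (1 - (1 - q) * exp (-s)) ≤ q / (q + s) := by
  have hexp : exp (-s) * (1 + s) ≤ 1 := by
    calc exp (-s) * (1 + s) ≤ exp (-s) * exp s := by
          gcongr; linarith [add_one_le_exp s]
      _ = 1 := by rw [← exp_add, neg_add_cancel, exp_zero]
  have hden : 0 < 1 - (1 - q) * exp (-s) := by nlinarith [exp_pos (-s)]
  rw [div_le_div_iff₀ hden (by linarith)]
  nlinarith [exp_pos (-s)]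

lemma div_add_mul_inv_sub_one_le_rpow {p q lam : ℝ} (hp : 0 < p) (hpq : p ≤ q)
    (hlam0 : 0 < lam) (hlam1 : lam ≤ 1) :
    q / (q + p * (lam⁻¹ - 1)) ≤ lam ^ (p / q) := by
  have hq : 0 < q := hp.trans_le hpq
  have hinv : 1 ≤ lam⁻¹ := one_le_inv_iff₀.2 ⟨hlam0, hlam1⟩
  have hbernoulli : lam⁻¹ ^ (p / q) ≤ (q + p * (lam⁻¹ - 1)) / q := by
    have h := rpow_one_add_le_one_add_mul_self (s := lam⁻¹ - 1) (by linarith)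
      (div_pos hp hq).le ((div_le_one hq).2 hpq)
    rw [add_sub_cancel] at h
    rw [add_div, div_self hq.ne', mul_div_right_comm]
    exact h
  rw [← inv_inv (lam ^ (p / q)), ← inv_rpow hlam0.le, ← inv_div]
  exact inv_anti₀ (by positivity) hbernoulli

section GeometricSum

variable {Ω : Type*} [MeasurableSpace Ω] {P : Measure Ω}

lemma mgf_natCast_le_rpow {Z : Ω → ℕ} {q : unitInterval} (hZ : Measurable Z)
    (hlaw : P.map Z = (geometricMeasure q).map (· + 1)) {p lam : ℝ} (hp : 0 < p)
    (hpq : p ≤ q) (hlam0 : 0 < lam) (hlam1 : lam ≤ 1) :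
    mgf (fun ω => (Z ω : ℝ)) P (-(p * (lam⁻¹ - 1))) ≤ lam ^ (p / q) := by
  have hq0 : 0 < (q : ℝ) := hp.trans_le hpq
  have hs : 0 ≤ p * (lam⁻¹ - 1) :=
    mul_nonneg hp.le (by linarith [one_le_inv_iff₀.2 ⟨hlam0, hlam1⟩])
  rw [mgf_natCast_of_map_eq hZ (unitInterval.coe_ne_zero.1 hq0.ne') hlaw (neg_nonpos.2 hs)]
  exact (geometric_mgf_le_div_add hq0 q.2.2 hs).trans
    (div_add_mul_inv_sub_one_le_rpow hp hpq hlam0 hlam1)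

lemma mgf_sum_natCast_le_rpow {ι : Type*} [Fintype ι] {Z : ι → Ω → ℕ}
    (hZ : ∀ i, Measurable (Z i)) (hindep : iIndepFun Z P) {q : ι → unitInterval}
    (hlaw : ∀ i, P.map (Z i) = (geometricMeasure (q i)).map (· + 1)) {p lam : ℝ} (hp : 0 < p)
    (hpq : ∀ i, p ≤ q i) (hlam0 : 0 < lam) (hlam1 : lam ≤ 1) :
    mgf (fun ω => ∑ i, (Z i ω : ℝ)) P (-(p * (lam⁻¹ - 1))) ≤
      lam ^ (p * ∑ i, (q i : ℝ)⁻¹) := by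
  have hZreal : ∀ i, Measurable fun ω => (Z i ω : ℝ) := fun i => by fun_prop
  have hindep' : iIndepFun (fun i ω => (Z i ω : ℝ)) P :=
    hindep.comp _ fun _ => measurable_from_top
  rw [show (fun ω => ∑ i, (Z i ω : ℝ)) = ∑ i, fun ω => (Z i ω : ℝ) by ext; simp,
    hindep'.mgf_sum hZreal, mul_sum, rpow_sum_of_pos hlam0]
  exact prod_le_prod (fun i _ => mgf_nonneg) fun i _ =>
    mgf_natCast_le_rpow (hZ i) (hlaw i) hp (hpq i) hlam0 hlam1

end GeometricSum

theorem stmt_19_general {Ω : Type*} [MeasureSpace Ω] [IsProbabilityMeasure (ℙ : Measure Ω)]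
    (n : ℕ)
    (p : ℝ) (hp0 : 0 < p)
    (pi : Fin n → ℝ) (hpi_ge : ∀ i, p ≤ pi i) (hpi_le : ∀ i, pi i ≤ 1)
    (X : Fin n → Ω → ℕ) (hXm : ∀ i, Measurable (X i))
    (hindep : iIndepFun X ℙ)
    -- each `X i` is geometric with success probability `pi i`, counting trials up to
    -- and including the first success
    (hgeom : ∀ (i : Fin n) (m : ℕ),
      ℙ {ω | X i ω = m + 1} = ENNReal.ofReal ((1 - pi i) ^ m * pi i))
    (lam : ℝ) (hlam0 : 0 < lam) (hlam1 : lam ≤ 1)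
    (μ : ℝ) (hμ : μ = ∫ ω, (∑ i, (X i ω : ℝ)) ∂ℙ) :
    ℙ {ω | (∑ i, (X i ω : ℝ)) ≤ lam * μ} ≤
      ENNReal.ofReal (Real.exp (-p * μ * (lam - 1 - Real.log lam))) := by
  let q : Fin n → unitInterval := fun i => ⟨pi i, (hp0.trans_le (hpi_ge i)).le, hpi_le i⟩
  have hq : ∀ i, q i ≠ 0 := fun i => unitInterval.coe_ne_zero.1 (hp0.trans_le (hpi_ge i)).ne'
  have hlaw : ∀ i, (ℙ : Measure Ω).map (X i) = (geometricMeasure (q i)).map (· + 1) := fun i =>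
    map_eq_map_succ_geometricMeasure (hXm i) (hq i) (hgeom i)
  have hmean : μ = ∑ i, (pi i)⁻¹ := by
    rw [hμ, integral_finsetSum _ fun i _ => integrable_natCast_of_map_eq (hXm i) (hq i) (hlaw i)]
    exact sum_congr rfl fun i _ => integral_natCast_of_map_eq (hXm i) (hq i) (hlaw i)
  have hmgf := mgf_sum_natCast_le_rpow hXm hindep hlaw hp0 hpi_ge hlam0 hlam1
  set s := p * (lam⁻¹ - 1) with hs_def
  have hs : 0 ≤ s := mul_nonneg hp0.le (by linarith [one_le_inv_iff₀.2 ⟨hlam0, hlam1⟩])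
  have hint : Integrable (fun ω => exp (-s * ∑ i, (X i ω : ℝ))) ℙ := by
    refine .of_mem_Icc 0 1 (by fun_prop) (ae_of_all _ fun ω => ⟨(exp_pos _).le, ?_⟩)
    exact exp_le_one_iff.2 (mul_nonpos_of_nonpos_of_nonneg (neg_nonpos.2 hs) (by positivity))
  have hchernoff := measure_le_le_exp_mul_mgf (lam * μ) (neg_nonpos.2 hs) hint
  rw [← ofReal_measureReal]
  refine ENNReal.ofReal_le_ofReal (hchernoff.trans ?_)
  calc exp (- -s * (lam * μ)) * mgf _ ℙ (-s) ≤ exp (s * (lam * μ)) * lam ^ (p * μ) := by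
        rw [neg_neg, hmean]; gcongr
    _ = exp (-p * μ * (lam - 1 - log lam)) := by
        rw [rpow_def_of_pos hlam0, ← exp_add, hs_def]
        congr 1
        field_simp
        ring

theorem stmt_19 {Ω : Type*} [MeasureSpace Ω] [IsProbabilityMeasure (ℙ : Measure Ω)]
    (n : ℕ) (hn : 0 < n)
    (p : ℝ) (hp0 : 0 < p) (hp1 : p ≤ 1)
    (δ : ℝ) (hδ0 : 0 < δ) (hδ1 : δ < 1)
    (pi : Fin n → ℝ) (hpi_ge : ∀ i, p ≤ pi i) (hpi_le : ∀ i, pi i ≤ 1)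
    (X : Fin n → Ω → ℕ) (hXm : ∀ i, Measurable (X i))
    (hindep : iIndepFun X ℙ)
    -- each `X i` is geometric with success probability `pi i`, counting trials up to
    -- and including the first success
    (hgeom : ∀ (i : Fin n) (m : ℕ),
      ℙ {ω | X i ω = m + 1} = ENNReal.ofReal ((1 - pi i) ^ m * pi i))
    (lam : ℝ) (hlam0 : 0 < lam) (hlam1 : lam ≤ 1)
    (μ : ℝ) (hμ : μ = ∫ ω, (∑ i, (X i ω : ℝ)) ∂ℙ) :
    ℙ {ω | (∑ i, (X i ω : ℝ)) ≤ lam * μ} ≤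
      ENNReal.ofReal (Real.exp (-p * μ * (lam - 1 - Real.log lam))) :=
  stmt_19_general n p hp0 pi hpi_ge hpi_le X hXm hindep hgeom lam hlam0 hlam1 μ hμ
end
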